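/- arXiv:1708.08429 — 10 statements merged into one kernel-verified Lean document; each statement's English description precedes it below -/
import Mathlib

section
/- When b₁ = b₂ = b, the function f₃ = m₁m₂ - bγ₁γ₂ is an integral of motion of the Suslov system: its directional derivative along the vector field X = (-bγ₁γ₃, bγ₂γ₃, m₁γ₃, -m₂γ₃, γ₂m₂ - γ₁m₁) vanishes identically. -/
/-! The Leibniz rule gives `X f₃ = X₁ m₂ + m₁ X₂ - b (X₃ γ₂ + γ₁ X₄)
  = -b γ₁ γ₃ m₂ + b m₁ γ₂ γ₃ - b (m₁ γ₃ γ₂ - γ₁ m₂ γ₃)`, which cancels term by term. -/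

theorem fderiv_apply_mul_apply {𝕜 ι : Type*} [NontriviallyNormedField 𝕜] [Fintype ι]
    (i j : ι) (x v : ι → 𝕜) :
    fderiv 𝕜 (fun y : ι → 𝕜 => y i * y j) x v = v i * x j + x i * v j := by
  rw [fderiv_fun_mul (by fun_prop) (by fun_prop), (hasFDerivAt_apply i x).fderiv,
    (hasFDerivAt_apply j x).fderiv]
  simp only [add_apply, smul_apply, ContinuousLinearMap.proj_apply, smul_eq_mul]
  ring

/-- When `b₁ = b₂ = b`, the function `f₃ = m₁m₂ - bγ₁γ₂` is an integral of motion: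
its directional derivative along the Suslov vector field vanishes identically. -/
theorem suslov_f3_integral (b : ℝ) :
    ∀ x : Fin 5 → ℝ,
      fderiv ℝ (fun y : Fin 5 → ℝ => y 0 * y 1 - b * y 2 * y 3) x
        (![-b * x 2 * x 4, b * x 3 * x 4, x 0 * x 4, -(x 1) * x 4,
           x 3 * x 1 - x 2 * x 0]) = 0 := by
  intro x
  have h_assoc : (fun y : Fin 5 → ℝ => y 0 * y 1 - b * y 2 * y 3) =
      fun y => y 0 * y 1 - b * (y 2 * y 3) := by
    funext y
    ring
  rw [h_assoc, fderiv_fun_sub (by fun_prop) (by fun_prop), fderiv_const_mul (by fun_prop)]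
  simp only [sub_apply, smul_apply, smul_eq_mul, fderiv_apply_mul_apply,
    Matrix.cons_val_zero, Matrix.cons_val_one, Matrix.cons_val]
  ring
end

section
/- The complex-valued function (m₁ + i√b₁ γ₁)^q (√b₂ γ₂ - i m₂)^p is constant along the flow of the Suslov vector field whenever p, q are nonnegative integers with q√b₁ = p√b₂; equivalently, its directional derivative along X = (-b₁γ₁γ₃, b₂γ₂γ₃, m₁γ₃, -m₂γ₃, γ₂m₂ - γ₁m₁) is identically zero. -/
/-!
Both factors are ℝ-linear forms that the Suslov field rescales:
`X(m₁ + i√b₁ γ₁) = i√b₁ γ₃ (m₁ + i√b₁ γ₁)` and `X(√b₂ γ₂ - i m₂) = -i√b₂ γ₃ (√b₂ γ₂ - i m₂)`.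
Hence, for the two factors `A` and `B`, `X(A^q B^p) = i γ₃ (q√b₁ - p√b₂) A^q B^p = 0`.
-/

open Complex

section DirectionalEigenfunction

variable {𝕜 𝔸 E : Type*} [NontriviallyNormedField 𝕜] [NormedCommRing 𝔸] [NormedAlgebra 𝕜 𝔸]
  [NormedAddCommGroup E] [NormedSpace 𝕜 E] {f g : E → 𝔸} {x v : E} {a b : 𝔸}

theorem fderiv_fun_pow_apply_of_eq_mul (hf : DifferentiableAt 𝕜 f x)
    (ha : fderiv 𝕜 f x v = a * f x) (n : ℕ) :
    fderiv 𝕜 (fun y => f y ^ n) x v = n * a * f x ^ n := by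
  rw [fderiv_fun_pow n hf, smul_apply, ha, nsmul_eq_mul]
  cases n with
  | zero => simp
  | succ n => rw [Nat.add_sub_cancel, pow_succ]; ring

theorem fderiv_pow_mul_pow_apply_of_eq_mul (hf : DifferentiableAt 𝕜 f x)
    (hg : DifferentiableAt 𝕜 g x) (ha : fderiv 𝕜 f x v = a * f x)
    (hb : fderiv 𝕜 g x v = b * g x) (q p : ℕ) :
    fderiv 𝕜 (fun y => f y ^ q * g y ^ p) x v = (q * a + p * b) * (f x ^ q * g x ^ p) := by
  rw [fderiv_fun_mul (hf.fun_pow q) (hg.fun_pow p), add_apply,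
    smul_apply, smul_apply, smul_eq_mul, smul_eq_mul,
    fderiv_fun_pow_apply_of_eq_mul hf ha, fderiv_fun_pow_apply_of_eq_mul hg hb]
  ring

end DirectionalEigenfunction

noncomputable def suslovField (b₁ b₂ : ℝ) (x : Fin 5 → ℝ) : Fin 5 → ℝ :=
  ![-b₁ * x 2 * x 4, b₂ * x 3 * x 4, x 0 * x 4, -(x 1) * x 4, x 3 * x 1 - x 2 * x 0]

noncomputable def suslovFactorLeft (b₁ : ℝ) : (Fin 5 → ℝ) →L[ℝ] ℂ :=
  ofRealCLM.comp (ContinuousLinearMap.proj 0) +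
    (I * (√b₁ : ℂ)) • ofRealCLM.comp (ContinuousLinearMap.proj 2)

noncomputable def suslovFactorRight (b₂ : ℝ) : (Fin 5 → ℝ) →L[ℝ] ℂ :=
  (√b₂ : ℂ) • ofRealCLM.comp (ContinuousLinearMap.proj 3) -
    I • ofRealCLM.comp (ContinuousLinearMap.proj 1)

theorem suslovFactorLeft_apply (b₁ : ℝ) (y : Fin 5 → ℝ) :
    suslovFactorLeft b₁ y = (y 0 : ℂ) + I * (√b₁ : ℂ) * (y 2 : ℂ) := by
  simp [suslovFactorLeft]

theorem suslovFactorRight_apply (b₂ : ℝ) (y : Fin 5 → ℝ) :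
    suslovFactorRight b₂ y = (√b₂ : ℂ) * (y 3 : ℂ) - I * (y 1 : ℂ) := by
  simp [suslovFactorRight]

theorem ofReal_sqrt_mul_self {b : ℝ} (hb : 0 ≤ b) : (√b : ℂ) * (√b : ℂ) = b := by
  rw [← ofReal_mul, Real.mul_self_sqrt hb]

theorem suslovFactorLeft_suslovField {b₁ : ℝ} (hb₁ : 0 ≤ b₁) (b₂ : ℝ) (x : Fin 5 → ℝ) :
    suslovFactorLeft b₁ (suslovField b₁ b₂ x) = I * √b₁ * x 4 * suslovFactorLeft b₁ x := by
  simp only [suslovFactorLeft_apply, suslovField]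
  push_cast
  linear_combination (x 2 * x 4 : ℂ) * (ofReal_sqrt_mul_self hb₁ - √b₁ * √b₁ * I_mul_I)

theorem suslovFactorRight_suslovField (b₁ : ℝ) {b₂ : ℝ} (hb₂ : 0 ≤ b₂) (x : Fin 5 → ℝ) :
    suslovFactorRight b₂ (suslovField b₁ b₂ x) = -(I * √b₂ * x 4) * suslovFactorRight b₂ x := by
  simp only [suslovFactorRight_apply, suslovField]
  push_cast
  linear_combination
    (I * x 3 * x 4 : ℂ) * ofReal_sqrt_mul_self hb₂ - (√b₂ * x 1 * x 4 : ℂ) * I_mul_I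

open Complex in
/-- The complex function `(m₁ + i√b₁ γ₁)^q (√b₂ γ₂ - i m₂)^p` is constant along the Suslov
flow whenever `q√b₁ = p√b₂`: its directional derivative along `X` is identically zero. -/
theorem suslov_complex_integral (b₁ b₂ : ℝ) (hb₁ : 0 < b₁) (hb₂ : 0 < b₂)
    (p q : ℕ) (hpq : (q : ℝ) * Real.sqrt b₁ = (p : ℝ) * Real.sqrt b₂) :
    ∀ x : Fin 5 → ℝ,
      fderiv ℝ (fun y : Fin 5 → ℝ =>
          ((y 0 : ℂ) + Complex.I * (Real.sqrt b₁ : ℂ) * (y 2 : ℂ)) ^ q *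
          ((Real.sqrt b₂ : ℂ) * (y 3 : ℂ) - Complex.I * (y 1 : ℂ)) ^ p) x
        (![-b₁ * x 2 * x 4, b₂ * x 3 * x 4, x 0 * x 4, -(x 1) * x 4,
           x 3 * x 1 - x 2 * x 0]) = 0 := by
  intro x
  have hpqC : (q : ℂ) * √b₁ = p * √b₂ := by exact_mod_cast hpq
  simp_rw [← suslovFactorLeft_apply, ← suslovFactorRight_apply]
  change fderiv ℝ _ x (suslovField b₁ b₂ x) = 0
  rw [fderiv_pow_mul_pow_apply_of_eq_mul (suslovFactorLeft b₁).differentiableAt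
    (suslovFactorRight b₂).differentiableAt
    (by rw [ContinuousLinearMap.fderiv, suslovFactorLeft_suslovField hb₁.le])
    (by rw [ContinuousLinearMap.fderiv, suslovFactorRight_suslovField b₁ hb₂.le])]
  linear_combination (I * x 4 * (suslovFactorLeft b₁ x ^ q * suslovFactorRight b₂ x ^ p)) * hpqC
end

section
/- The level set S_k = {(m₁,m₂,γ₁,γ₂,γ₃) ∈ ℝ⁵ : m₁² + b₁γ₁² = k₁, m₂² + b₂γ₂² = k₂, γ₁² + γ₂² + γ₃² = 1} has, at every point, the 3×5 Jacobian matrix of the three defining functions of rank 3, provided k₁ > 0, k₂ > 0, k₁ ≠ b₁, k₂ ≠ b₂, and k₁/b₁ + k₂/b₂ ≠ 1. -/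
/-!
The Jacobian `J` has rank 3 iff its Gram determinant `det (J Jᵀ)` is nonzero, and that
determinant is identically a sum of four nonnegative terms
`m₁²m₂²|γ|² + b₁²m₂²γ₁²(γ₂²+γ₃²) + b₂²m₁²γ₂²(γ₁²+γ₃²) + b₁²b₂²γ₁²γ₂²γ₃²`.
Which term is positive depends on which of `m₁, m₂` vanish; whenever `mᵢ = 0` the level set
pins `γᵢ² = kᵢ/bᵢ`, and the three inequations on `k` rule out precisely the ways in which the
relevant term could still vanish.
-/

open Matrix

theorem Matrix.rank_eq_card_of_det_mul_transpose_ne_zero {m n R : Type*} [Fintype m]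
    [DecidableEq m] [Fintype n] [Field R] [LinearOrder R] [IsStrictOrderedRing R]
    (A : Matrix m n R) (h : (A * Aᵀ).det ≠ 0) : A.rank = Fintype.card m := by
  rw [← rank_self_mul_transpose, rank_of_isUnit _ ((isUnit_iff_isUnit_det _).mpr h.isUnit)]

def levelSetJacobian (b₁ b₂ m₁ m₂ γ₁ γ₂ γ₃ : ℝ) : Matrix (Fin 3) (Fin 5) ℝ :=
  Matrix.of ![![m₁, 0, b₁ * γ₁, 0, 0],
              ![0, m₂, 0, b₂ * γ₂, 0],
              ![0, 0, γ₁, γ₂, γ₃]]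

theorem det_levelSetJacobian_mul_transpose (b₁ b₂ m₁ m₂ γ₁ γ₂ γ₃ : ℝ) :
    (levelSetJacobian b₁ b₂ m₁ m₂ γ₁ γ₂ γ₃ * (levelSetJacobian b₁ b₂ m₁ m₂ γ₁ γ₂ γ₃)ᵀ).det =
      m₁ ^ 2 * m₂ ^ 2 * (γ₁ ^ 2 + γ₂ ^ 2 + γ₃ ^ 2)
      + b₁ ^ 2 * m₂ ^ 2 * γ₁ ^ 2 * (γ₂ ^ 2 + γ₃ ^ 2)
      + b₂ ^ 2 * m₁ ^ 2 * γ₂ ^ 2 * (γ₁ ^ 2 + γ₃ ^ 2)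
      + b₁ ^ 2 * b₂ ^ 2 * γ₁ ^ 2 * γ₂ ^ 2 * γ₃ ^ 2 := by
  rw [det_fin_three]
  simp only [levelSetJacobian, Fin.isValue, mul_apply, of_apply, cons_val', cons_val_fin_one,
    cons_val_zero, transpose_apply, Fin.sum_univ_five, cons_val_one, mul_zero, add_zero, cons_val,
    zero_add, zero_mul, sub_zero]
  ring

theorem det_levelSetJacobian_mul_transpose_pos {b₁ b₂ k₁ k₂ m₁ m₂ γ₁ γ₂ γ₃ : ℝ}
    (hb₁ : 0 < b₁) (hb₂ : 0 < b₂) (hk₁ : 0 < k₁) (hk₂ : 0 < k₂) (h₁ : k₁ ≠ b₁) (h₂ : k₂ ≠ b₂)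
    (h₃ : k₁ / b₁ + k₂ / b₂ ≠ 1)
    (e₁ : m₁ ^ 2 + b₁ * γ₁ ^ 2 = k₁) (e₂ : m₂ ^ 2 + b₂ * γ₂ ^ 2 = k₂)
    (e₃ : γ₁ ^ 2 + γ₂ ^ 2 + γ₃ ^ 2 = 1) :
    0 < (levelSetJacobian b₁ b₂ m₁ m₂ γ₁ γ₂ γ₃ *
      (levelSetJacobian b₁ b₂ m₁ m₂ γ₁ γ₂ γ₃)ᵀ).det := by
  have hkb₁ : k₁ / b₁ ≠ 1 := by rwa [Ne, div_eq_one_iff_eq hb₁.ne']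
  have hkb₂ : k₂ / b₂ ≠ 1 := by rwa [Ne, div_eq_one_iff_eq hb₂.ne']
  rw [det_levelSetJacobian_mul_transpose]
  rcases eq_or_ne m₁ 0 with rfl | hm₁ <;> rcases eq_or_ne m₂ 0 with rfl | hm₂
  · have hγ₁ : γ₁ ^ 2 = k₁ / b₁ := by
      rw [eq_div_iff hb₁.ne']; linear_combination e₁
    have hγ₂ : γ₂ ^ 2 = k₂ / b₂ := by
      rw [eq_div_iff hb₂.ne']; linear_combination e₂
    have : γ₃ ^ 2 ≠ 0 := by
      intro hγ₃
      exact h₃ (by rw [← hγ₁, ← hγ₂]; linarith)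
    have : γ₁ ^ 2 ≠ 0 := by rw [hγ₁]; positivity
    have : γ₂ ^ 2 ≠ 0 := by rw [hγ₂]; positivity
    positivity
  · have hγ₁ : γ₁ ^ 2 = k₁ / b₁ := by
      rw [eq_div_iff hb₁.ne']; linear_combination e₁
    have : γ₁ ^ 2 ≠ 0 := by rw [hγ₁]; positivity
    have : γ₂ ^ 2 + γ₃ ^ 2 ≠ 0 := by
      intro h
      exact hkb₁ (by rw [← hγ₁]; linarith)
    positivity
  · have hγ₂ : γ₂ ^ 2 = k₂ / b₂ := by
      rw [eq_div_iff hb₂.ne']; linear_combination e₂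
    have : γ₂ ^ 2 ≠ 0 := by rw [hγ₂]; positivity
    have : γ₁ ^ 2 + γ₃ ^ 2 ≠ 0 := by
      intro h
      exact hkb₂ (by rw [← hγ₂]; linarith)
    positivity
  · have : γ₁ ^ 2 + γ₂ ^ 2 + γ₃ ^ 2 ≠ 0 := by rw [e₃]; norm_num
    positivity

/-- For `k₁, k₂ > 0`, `k₁ ≠ b₁`, `k₂ ≠ b₂`, `k₁/b₁ + k₂/b₂ ≠ 1`, at every point of the
level set `S_k` the 3×5 Jacobian of the defining map has rank 3. -/
theorem suslov_level_set_smooth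
    (b₁ b₂ k₁ k₂ : ℝ) (hb₁ : 0 < b₁) (hb₂ : 0 < b₂)
    (hk₁ : 0 < k₁) (hk₂ : 0 < k₂) (h₁ : k₁ ≠ b₁) (h₂ : k₂ ≠ b₂)
    (h₃ : k₁ / b₁ + k₂ / b₂ ≠ 1)
    (m₁ m₂ γ₁ γ₂ γ₃ : ℝ)
    (e₁ : m₁ ^ 2 + b₁ * γ₁ ^ 2 = k₁)
    (e₂ : m₂ ^ 2 + b₂ * γ₂ ^ 2 = k₂)
    (e₃ : γ₁ ^ 2 + γ₂ ^ 2 + γ₃ ^ 2 = 1) :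
    (Matrix.of ![![m₁, 0, b₁ * γ₁, 0, 0],
                 ![0, m₂, 0, b₂ * γ₂, 0],
                 ![0, 0, γ₁, γ₂, γ₃]] : Matrix (Fin 3) (Fin 5) ℝ).rank = 3 :=
  (levelSetJacobian b₁ b₂ m₁ m₂ γ₁ γ₂ γ₃).rank_eq_card_of_det_mul_transpose_ne_zero
    (det_levelSetJacobian_mul_transpose_pos hb₁ hb₂ hk₁ hk₂ h₁ h₂ h₃ e₁ e₂ e₃).ne'
end

section
/- If k₁k₂ = 0, or k₁ = b₁, or k₂ = b₂, or k₁/b₁ + k₂/b₂ = 1 (with k₁, k₂ ≥ 0 and k₁/b₁ + k₂/b₂ ≤ 1 in the last case so the point exists), then there exists a point of S_k at which the Jacobian of the defining map has rank less than 3, or S_k is empty; in particular when k₁ > 0, k₂ > 0 and k₁/b₁ + k₂/b₂ = 1, the point with m₁ = m₂ = 0, γ₁ = √(k₁/b₁), γ₂ = √(k₂/b₂), γ₃ = 0 lies in S_k and the Jacobian there has rank at most 2. -/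
/-!
The Jacobian has rank `< 3` as soon as its three rows satisfy a nontrivial linear relation,
and each hypothesis produces such a point on `S_k`. If `k₁ = 0` (or `k₂ = 0`), then
`m₁² + b₁γ₁² = 0` forces `m₁ = γ₁ = 0` on all of `S_k`, so the first row vanishes everywhere.
If `k₁ = b₁`, the point `γ₁ = 1`, `m₁ = 0` makes the first row `b₁` times the third
(symmetrically for `k₂ = b₂`). If `k₁/b₁ + k₂/b₂ = 1`, at `m₁ = m₂ = γ₃ = 0` the third row is
`b₁⁻¹` times the first plus `b₂⁻¹` times the second.
-/

open Matrix

theorem Matrix.rank_lt_card_height_of_sum_smul_row_eq_zero {R m n : Type*} [Field R]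
    [Fintype m] [Fintype n] {M : Matrix m n R} (g : m → R) (hg : ∑ i, g i • M.row i = 0) (i : m)
    (hi : g i ≠ 0) : M.rank < Fintype.card m := by
  have hdep : ¬ LinearIndependent R M.row := Fintype.not_linearIndependent_iff.2 ⟨g, hg, i, hi⟩
  rw [M.rank_eq_finrank_span_row]
  exact (finrank_range_le_card _).lt_of_ne
    fun h => hdep (linearIndependent_iff_card_eq_finrank_span.2 h.symm)

def suslovJacobian (b₁ b₂ m₁ m₂ γ₁ γ₂ γ₃ : ℝ) : Matrix (Fin 3) (Fin 5) ℝ :=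
  Matrix.of ![![m₁, 0, b₁ * γ₁, 0, 0],
              ![0, m₂, 0, b₂ * γ₂, 0],
              ![0, 0, γ₁, γ₂, γ₃]]

section suslovJacobian

variable (b₁ b₂ : ℝ)

theorem rank_suslovJacobian_lt_of_row₁_eq_zero (m₂ γ₂ γ₃ : ℝ) :
    (suslovJacobian b₁ b₂ 0 m₂ 0 γ₂ γ₃).rank < 3 :=
  (rank_lt_card_height_of_sum_smul_row_eq_zero ![1, 0, 0]
    (by ext j; fin_cases j <;> simp [suslovJacobian, Fin.sum_univ_three]) 0
    one_ne_zero).trans_eq (Fintype.card_fin 3)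

theorem rank_suslovJacobian_lt_of_row₂_eq_zero (m₁ γ₁ γ₃ : ℝ) :
    (suslovJacobian b₁ b₂ m₁ 0 γ₁ 0 γ₃).rank < 3 :=
  (rank_lt_card_height_of_sum_smul_row_eq_zero ![0, 1, 0]
    (by ext j; fin_cases j <;> simp [suslovJacobian, Fin.sum_univ_three]) 1
    one_ne_zero).trans_eq (Fintype.card_fin 3)

theorem rank_suslovJacobian_lt_of_row₁_eq_smul_row₃ (m₂ γ₁ : ℝ) :
    (suslovJacobian b₁ b₂ 0 m₂ γ₁ 0 0).rank < 3 :=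
  (rank_lt_card_height_of_sum_smul_row_eq_zero ![1, 0, -b₁]
    (by ext j; fin_cases j <;> simp [suslovJacobian, Fin.sum_univ_three]) 0
    one_ne_zero).trans_eq (Fintype.card_fin 3)

theorem rank_suslovJacobian_lt_of_row₂_eq_smul_row₃ (m₁ γ₂ : ℝ) :
    (suslovJacobian b₁ b₂ m₁ 0 0 γ₂ 0).rank < 3 :=
  (rank_lt_card_height_of_sum_smul_row_eq_zero ![0, 1, -b₂]
    (by ext j; fin_cases j <;> simp [suslovJacobian, Fin.sum_univ_three]) 1
    one_ne_zero).trans_eq (Fintype.card_fin 3)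

variable {b₁ b₂}

theorem rank_suslovJacobian_lt_of_row₃_mem_span (hb₁ : b₁ ≠ 0) (hb₂ : b₂ ≠ 0) (γ₁ γ₂ : ℝ) :
    (suslovJacobian b₁ b₂ 0 0 γ₁ γ₂ 0).rank < 3 :=
  (rank_lt_card_height_of_sum_smul_row_eq_zero ![b₁⁻¹, b₂⁻¹, -1]
    (by ext j; fin_cases j <;> simp [suslovJacobian, Fin.sum_univ_three, hb₁, hb₂]) 2
    (by simp)).trans_eq (Fintype.card_fin 3)

end suslovJacobian

theorem eq_zero_and_eq_zero_of_sq_add_mul_sq_eq_zero {b m γ : ℝ} (hb : 0 < b)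
    (h : m ^ 2 + b * γ ^ 2 = 0) : m = 0 ∧ γ = 0 := by
  obtain ⟨hm, hγ⟩ := (add_eq_zero_iff_of_nonneg (sq_nonneg m) (by positivity)).1 h
  exact ⟨pow_eq_zero_iff two_ne_zero |>.1 hm,
    pow_eq_zero_iff two_ne_zero |>.1 ((mul_eq_zero.1 hγ).resolve_left hb.ne')⟩

theorem mul_sq_sqrt_div {b k : ℝ} (hb : 0 < b) (hk : 0 ≤ k) : b * Real.sqrt (k / b) ^ 2 = k := by
  rw [Real.sq_sqrt (div_nonneg hk hb.le)]
  field_simp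

theorem sqrt_div_mem_level_set {b₁ b₂ k₁ k₂ : ℝ} (hb₁ : 0 < b₁) (hb₂ : 0 < b₂)
    (hk₁ : 0 ≤ k₁) (hk₂ : 0 ≤ k₂) (hsum : k₁ / b₁ + k₂ / b₂ = 1) :
    (0:ℝ) ^ 2 + b₁ * Real.sqrt (k₁ / b₁) ^ 2 = k₁ ∧
      (0:ℝ) ^ 2 + b₂ * Real.sqrt (k₂ / b₂) ^ 2 = k₂ ∧
      Real.sqrt (k₁ / b₁) ^ 2 + Real.sqrt (k₂ / b₂) ^ 2 + (0:ℝ) ^ 2 = 1 := by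
  refine ⟨by simp [mul_sq_sqrt_div hb₁ hk₁], by simp [mul_sq_sqrt_div hb₂ hk₂], ?_⟩
  rw [Real.sq_sqrt (div_nonneg hk₁ hb₁.le), Real.sq_sqrt (div_nonneg hk₂ hb₂.le)]
  simpa using hsum

/-- If `k₁k₂ = 0`, or `k₁ = b₁`, or `k₂ = b₂`, or `k₁/b₁ + k₂/b₂ = 1` (with the level set
nonempty in that last case), then there is a point of `S_k` where the Jacobian has rank
less than 3, or `S_k` is empty; in particular, when `k₁, k₂ > 0` and `k₁/b₁ + k₂/b₂ = 1`,
the point `m₁ = m₂ = 0`, `γ₁ = √(k₁/b₁)`, `γ₂ = √(k₂/b₂)`, `γ₃ = 0` lies in `S_k` and the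
Jacobian there has rank at most 2. -/
theorem suslov_level_set_singular
    (b₁ b₂ k₁ k₂ : ℝ) (hb₁ : 0 < b₁) (hb₂ : 0 < b₂)
    (hk₁ : 0 ≤ k₁) (hk₂ : 0 ≤ k₂)
    (J : ℝ → ℝ → ℝ → ℝ → ℝ → Matrix (Fin 3) (Fin 5) ℝ)
    (hJ : ∀ m₁ m₂ γ₁ γ₂ γ₃, J m₁ m₂ γ₁ γ₂ γ₃ =
      Matrix.of ![![m₁, 0, b₁ * γ₁, 0, 0],
                  ![0, m₂, 0, b₂ * γ₂, 0],
                  ![0, 0, γ₁, γ₂, γ₃]])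
    (h : k₁ * k₂ = 0 ∨ k₁ = b₁ ∨ k₂ = b₂ ∨
        (k₁ / b₁ + k₂ / b₂ = 1 ∧ k₁ / b₁ + k₂ / b₂ ≤ 1)) :
    ((∃ m₁ m₂ γ₁ γ₂ γ₃ : ℝ,
        m₁ ^ 2 + b₁ * γ₁ ^ 2 = k₁ ∧ m₂ ^ 2 + b₂ * γ₂ ^ 2 = k₂ ∧
        γ₁ ^ 2 + γ₂ ^ 2 + γ₃ ^ 2 = 1 ∧ (J m₁ m₂ γ₁ γ₂ γ₃).rank < 3) ∨
      ¬ ∃ m₁ m₂ γ₁ γ₂ γ₃ : ℝ,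
        m₁ ^ 2 + b₁ * γ₁ ^ 2 = k₁ ∧ m₂ ^ 2 + b₂ * γ₂ ^ 2 = k₂ ∧
        γ₁ ^ 2 + γ₂ ^ 2 + γ₃ ^ 2 = 1) ∧
    (0 < k₁ → 0 < k₂ → k₁ / b₁ + k₂ / b₂ = 1 →
      ((0:ℝ) ^ 2 + b₁ * (Real.sqrt (k₁ / b₁)) ^ 2 = k₁ ∧
       (0:ℝ) ^ 2 + b₂ * (Real.sqrt (k₂ / b₂)) ^ 2 = k₂ ∧
       (Real.sqrt (k₁ / b₁)) ^ 2 + (Real.sqrt (k₂ / b₂)) ^ 2 + (0:ℝ) ^ 2 = 1) ∧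
      (J 0 0 (Real.sqrt (k₁ / b₁)) (Real.sqrt (k₂ / b₂)) 0).rank ≤ 2) := by
  obtain rfl : J = suslovJacobian b₁ b₂ := by funext m₁ m₂ γ₁ γ₂ γ₃; exact hJ m₁ m₂ γ₁ γ₂ γ₃
  have singular_point := rank_suslovJacobian_lt_of_row₃_mem_span hb₁.ne' hb₂.ne'
  refine ⟨?_, fun _ _ hsum => ⟨sqrt_div_mem_level_set hb₁ hb₂ hk₁ hk₂ hsum,
    Nat.lt_succ_iff.1 (singular_point _ _)⟩⟩
  rcases h with h | h | h | ⟨hsum, -⟩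
  · by_cases hS : ∃ m₁ m₂ γ₁ γ₂ γ₃ : ℝ, m₁ ^ 2 + b₁ * γ₁ ^ 2 = k₁ ∧
        m₂ ^ 2 + b₂ * γ₂ ^ 2 = k₂ ∧ γ₁ ^ 2 + γ₂ ^ 2 + γ₃ ^ 2 = 1
    · obtain ⟨m₁, m₂, γ₁, γ₂, γ₃, h₁, h₂, h₃⟩ := hS
      refine .inl ⟨m₁, m₂, γ₁, γ₂, γ₃, h₁, h₂, h₃, ?_⟩
      rcases mul_eq_zero.1 h with rfl | rfl
      · obtain ⟨rfl, rfl⟩ := eq_zero_and_eq_zero_of_sq_add_mul_sq_eq_zero hb₁ h₁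
        exact rank_suslovJacobian_lt_of_row₁_eq_zero b₁ b₂ m₂ γ₂ γ₃
      · obtain ⟨rfl, rfl⟩ := eq_zero_and_eq_zero_of_sq_add_mul_sq_eq_zero hb₂ h₂
        exact rank_suslovJacobian_lt_of_row₂_eq_zero b₁ b₂ m₁ γ₁ γ₃
    · exact .inr hS
  · exact .inl ⟨0, Real.sqrt k₂, 1, 0, 0, by simp [h], by simp [hk₂], by norm_num,
      rank_suslovJacobian_lt_of_row₁_eq_smul_row₃ b₁ b₂ _ 1⟩
  · exact .inl ⟨Real.sqrt k₁, 0, 0, 1, 0, by simp [hk₁], by simp [h], by norm_num,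
      rank_suslovJacobian_lt_of_row₂_eq_smul_row₃ b₁ b₂ _ 1⟩
  · obtain ⟨h₁, h₂, h₃⟩ := sqrt_div_mem_level_set hb₁ hb₂ hk₁ hk₂ hsum
    exact .inl ⟨0, 0, _, _, 0, h₁, h₂, h₃, singular_point _ _⟩
end

section
/- Using the parametrization m₁ = √k₁ cos θ₁, γ₁ = √(k₁/b₁) sin θ₁, m₂ = √k₂ sin θ₂, γ₂ = √(k₂/b₂) cos θ₂, along any solution of the Suslov system on the level set S_k, the angles satisfy θ̇₁ = √b₁ γ₃ and θ̇₂ = √b₂ γ₃. In particular, √b₂ θ₁ - √b₁ θ₂ is constant along solutions. -/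
/-!
On `S_k` the pairs `(m₁, γ₁)` and `(γ₂, m₂)` run along ellipses, and the Suslov equations say
that each moves like a point rotating with angular velocity `√bᵢ γ₃`. Differentiating the
parametrization, the equations give `sin θ (θ̇ - ω) = 0` and `cos θ (θ̇ - ω) = 0`, hence
`θ̇ = ω` because `sin² + cos² = 1`.
-/

open Real

theorem hasDerivAt_of_hasDerivAt_cos_sin {θ : ℝ → ℝ} {t ω : ℝ} (hθ : DifferentiableAt ℝ θ t)
    (hcos : HasDerivAt (fun s => cos (θ s)) (-sin (θ t) * ω) t)
    (hsin : HasDerivAt (fun s => sin (θ s)) (cos (θ t) * ω) t) :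
    HasDerivAt θ ω t := by
  have hd := hθ.hasDerivAt
  have hs : sin (θ t) * deriv θ t = sin (θ t) * ω := by
    linear_combination hcos.unique hd.cos
  have hc : cos (θ t) * deriv θ t = cos (θ t) * ω := by
    linear_combination hd.sin.unique hsin
  have hω : deriv θ t = ω := by
    linear_combination sin (θ t) * hs + cos (θ t) * hc - (deriv θ t - ω) * sin_sq_add_cos_sq (θ t)
  exact hω ▸ hd

theorem hasDerivAt_angle_of_ellipse {x y θ : ℝ → ℝ} {a c t ω : ℝ} (ha : a ≠ 0) (hc : c ≠ 0)
    (hθ : DifferentiableAt ℝ θ t) (hx : ∀ s, x s = a * cos (θ s)) (hy : ∀ s, y s = c * sin (θ s))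
    (hx' : HasDerivAt x (-(a / c) * y t * ω) t) (hy' : HasDerivAt y (c / a * x t * ω) t) :
    HasDerivAt θ ω t := by
  have hcos : (fun s => cos (θ s)) = fun s => x s / a := by
    ext s; rw [hx, mul_div_cancel_left₀ _ ha]
  have hsin : (fun s => sin (θ s)) = fun s => y s / c := by
    ext s; rw [hy, mul_div_cancel_left₀ _ hc]
  refine hasDerivAt_of_hasDerivAt_cos_sin hθ ?_ ?_
  · rw [hcos]; refine (hx'.div_const a).congr_deriv ?_; rw [hy]; field_simp
  · rw [hsin]; refine (hy'.div_const c).congr_deriv ?_; rw [hx]; field_simp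

theorem sqrt_div_sqrt_div {k : ℝ} (hk : 0 < k) (b : ℝ) : √k / √(k / b) = √b := by
  rw [sqrt_div hk.le, div_div_cancel₀ (sqrt_pos.mpr hk).ne']

theorem suslov_angular_flow_general
    (b₁ b₂ k₁ k₂ : ℝ) (hb₁ : 0 < b₁) (hb₂ : 0 < b₂) (hk₁ : 0 < k₁) (hk₂ : 0 < k₂)
    (m₁ m₂ γ₁ γ₂ γ₃ θ₁ θ₂ : ℝ → ℝ)
    (hm₁ : ∀ t, HasDerivAt m₁ (-b₁ * γ₁ t * γ₃ t) t)
    (hm₂ : ∀ t, HasDerivAt m₂ (b₂ * γ₂ t * γ₃ t) t)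
    (hγ₁ : ∀ t, HasDerivAt γ₁ (m₁ t * γ₃ t) t)
    (hγ₂ : ∀ t, HasDerivAt γ₂ (-(m₂ t) * γ₃ t) t)
    (hθ₁ : Differentiable ℝ θ₁) (hθ₂ : Differentiable ℝ θ₂)
    (p₁ : ∀ t, m₁ t = Real.sqrt k₁ * Real.cos (θ₁ t))
    (p₂ : ∀ t, γ₁ t = Real.sqrt (k₁ / b₁) * Real.sin (θ₁ t))
    (p₃ : ∀ t, m₂ t = Real.sqrt k₂ * Real.sin (θ₂ t))
    (p₄ : ∀ t, γ₂ t = Real.sqrt (k₂ / b₂) * Real.cos (θ₂ t)) :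
    (∀ t, HasDerivAt θ₁ (Real.sqrt b₁ * γ₃ t) t) ∧
    (∀ t, HasDerivAt θ₂ (Real.sqrt b₂ * γ₃ t) t) ∧
    (∀ t, HasDerivAt (fun t => Real.sqrt b₂ * θ₁ t - Real.sqrt b₁ * θ₂ t) 0 t) := by
  have hθ₁' : ∀ t, HasDerivAt θ₁ (√b₁ * γ₃ t) t := fun t => by
    refine hasDerivAt_angle_of_ellipse (sqrt_pos.mpr hk₁).ne' (sqrt_pos.mpr (div_pos hk₁ hb₁)).ne'
      (hθ₁ t) p₁ p₂ ?_ ?_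
    · rw [sqrt_div_sqrt_div hk₁]
      refine (hm₁ t).congr_deriv ?_
      linear_combination γ₁ t * γ₃ t * mul_self_sqrt hb₁.le
    · rw [← inv_div, sqrt_div_sqrt_div hk₁]
      refine (hγ₁ t).congr_deriv ?_
      field_simp
  have hθ₂' : ∀ t, HasDerivAt θ₂ (√b₂ * γ₃ t) t := fun t => by
    refine hasDerivAt_angle_of_ellipse (sqrt_pos.mpr (div_pos hk₂ hb₂)).ne' (sqrt_pos.mpr hk₂).ne'
      (hθ₂ t) p₄ p₃ ?_ ?_
    · rw [← inv_div, sqrt_div_sqrt_div hk₂]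
      refine (hγ₂ t).congr_deriv ?_
      field_simp
    · rw [sqrt_div_sqrt_div hk₂]
      refine (hm₂ t).congr_deriv ?_
      linear_combination -γ₂ t * γ₃ t * mul_self_sqrt hb₂.le
  exact ⟨hθ₁', hθ₂', fun t =>
    (((hθ₁' t).const_mul √b₂).sub ((hθ₂' t).const_mul √b₁)).congr_deriv (by ring)⟩

/-- In the angular parametrization of the level set `S_k`, the Suslov flow satisfies
`θ̇₁ = √b₁ γ₃`, `θ̇₂ = √b₂ γ₃`; in particular `√b₂ θ₁ - √b₁ θ₂` is constant. -/
theorem suslov_angular_flow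
    (b₁ b₂ k₁ k₂ : ℝ) (hb₁ : 0 < b₁) (hb₂ : 0 < b₂) (hk₁ : 0 < k₁) (hk₂ : 0 < k₂)
    (m₁ m₂ γ₁ γ₂ γ₃ θ₁ θ₂ : ℝ → ℝ)
    (hm₁ : ∀ t, HasDerivAt m₁ (-b₁ * γ₁ t * γ₃ t) t)
    (hm₂ : ∀ t, HasDerivAt m₂ (b₂ * γ₂ t * γ₃ t) t)
    (hγ₁ : ∀ t, HasDerivAt γ₁ (m₁ t * γ₃ t) t)
    (hγ₂ : ∀ t, HasDerivAt γ₂ (-(m₂ t) * γ₃ t) t)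
    (hγ₃ : ∀ t, HasDerivAt γ₃ (γ₂ t * m₂ t - γ₁ t * m₁ t) t)
    (lev₁ : ∀ t, (m₁ t) ^ 2 + b₁ * (γ₁ t) ^ 2 = k₁)
    (lev₂ : ∀ t, (m₂ t) ^ 2 + b₂ * (γ₂ t) ^ 2 = k₂)
    (hθ₁ : Differentiable ℝ θ₁) (hθ₂ : Differentiable ℝ θ₂)
    (p₁ : ∀ t, m₁ t = Real.sqrt k₁ * Real.cos (θ₁ t))
    (p₂ : ∀ t, γ₁ t = Real.sqrt (k₁ / b₁) * Real.sin (θ₁ t))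
    (p₃ : ∀ t, m₂ t = Real.sqrt k₂ * Real.sin (θ₂ t))
    (p₄ : ∀ t, γ₂ t = Real.sqrt (k₂ / b₂) * Real.cos (θ₂ t)) :
    (∀ t, HasDerivAt θ₁ (Real.sqrt b₁ * γ₃ t) t) ∧
    (∀ t, HasDerivAt θ₂ (Real.sqrt b₂ * γ₃ t) t) ∧
    (∀ t, HasDerivAt (fun t => Real.sqrt b₂ * θ₁ t - Real.sqrt b₁ * θ₂ t) 0 t) :=
  suslov_angular_flow_general b₁ b₂ k₁ k₂ hb₁ hb₂ hk₁ hk₂ m₁ m₂ γ₁ γ₂ γ₃ θ₁ θ₂ hm₁ hm₂ hγ₁ hγ₂ hθ₁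
    hθ₂ p₁ p₂ p₃ p₄
end

section
/- At a critical point of the Suslov vector field on S_k (a point with γ₃ = 0 and γ₂m₂ = γ₁m₁, all of m₁, m₂, γ₁, γ₂ nonzero), γ₁² satisfies the quadratic equation (b₁ - b₂)γ₁⁴ - (k₁ + k₂ - 2b₂)γ₁² + (k₂ - b₂) = 0. -/
theorem suslov_critical_point_quartic_general
    (b₁ b₂ k₁ k₂ : ℝ)
    (m₁ m₂ γ₁ γ₂ : ℝ)
    (e₁ : m₁ ^ 2 + b₁ * γ₁ ^ 2 = k₁) (e₂ : m₂ ^ 2 + b₂ * γ₂ ^ 2 = k₂)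
    (e₃ : γ₁ ^ 2 + γ₂ ^ 2 = 1)
    (hcrit : γ₂ * m₂ = γ₁ * m₁) :
    (b₁ - b₂) * γ₁ ^ 4 - (k₁ + k₂ - 2 * b₂) * γ₁ ^ 2 + (k₂ - b₂) = 0 := by
  have hsq : γ₂ ^ 2 * m₂ ^ 2 = γ₁ ^ 2 * m₁ ^ 2 := by rw [← mul_pow, hcrit, mul_pow]
  -- eliminate `mᵢ² = kᵢ - bᵢγᵢ²`, then `γ₂² = 1 - γ₁²`
  linear_combination hsq - γ₂ ^ 2 * e₂ + γ₁ ^ 2 * e₁ - (k₂ - b₂ * (γ₂ ^ 2 + 1 - γ₁ ^ 2)) * e₃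

/-- At a critical point of the Suslov vector field on `S_k`, `γ₁²` satisfies
`(b₁ - b₂)γ₁⁴ - (k₁ + k₂ - 2b₂)γ₁² + (k₂ - b₂) = 0`. -/
theorem suslov_critical_point_quartic
    (b₁ b₂ k₁ k₂ : ℝ) (hb₁ : 0 < b₁) (hb₂ : 0 < b₂) (hk₁ : 0 < k₁) (hk₂ : 0 < k₂)
    (m₁ m₂ γ₁ γ₂ : ℝ)
    (e₁ : m₁ ^ 2 + b₁ * γ₁ ^ 2 = k₁) (e₂ : m₂ ^ 2 + b₂ * γ₂ ^ 2 = k₂)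
    (e₃ : γ₁ ^ 2 + γ₂ ^ 2 = 1)
    (hcrit : γ₂ * m₂ = γ₁ * m₁)
    (hm₁ : m₁ ≠ 0) (hm₂ : m₂ ≠ 0) (hγ₁ : γ₁ ≠ 0) (hγ₂ : γ₂ ≠ 0) :
    (b₁ - b₂) * γ₁ ^ 4 - (k₁ + k₂ - 2 * b₂) * γ₁ ^ 2 + (k₂ - b₂) = 0 :=
  suslov_critical_point_quartic_general b₁ b₂ k₁ k₂ m₁ m₂ γ₁ γ₂ e₁ e₂ e₃ hcrit
end

section
/- Suppose b₁ = b₂ = b > 0 and k₁ + k₂ > b with k₁ < b and k₂ < b (region D₂). Set γ₁* = √((k₂-b)/(k₁+k₂-2b)), γ₂* = √((k₁-b)/(k₁+k₂-2b)), and t = √(k₁+k₂-b). Then the point (tγ₂*, tγ₁*, γ₁*, γ₂*, 0) lies on S_k and is a zero of the Suslov vector field X. -/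
/-! Since `γ₃ = 0` and `m = t γ*` is proportional to `(γ₂*, γ₁*)`, every component of `X` vanishes
identically. Membership in `S_k` only involves the squares `γ₁*², γ₂*², t²`, which are rational in
`k` with common denominator `k₁ + k₂ - 2b`; the region `D₂` makes every radicand nonnegative. -/

theorem sq_sqrt_div_of_nonpos {a d : ℝ} (ha : a ≤ 0) (hd : d ≤ 0) :
    Real.sqrt (a / d) ^ 2 = a / d :=
  Real.sq_sqrt (div_nonneg_of_nonpos ha hd)

theorem mem_level_set_of_sq_eq {b k₁ k₂ γ₁ γ₂ t : ℝ} (hd : k₁ + k₂ - 2 * b ≠ 0)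
    (hγ₁ : γ₁ ^ 2 = (k₂ - b) / (k₁ + k₂ - 2 * b)) (hγ₂ : γ₂ ^ 2 = (k₁ - b) / (k₁ + k₂ - 2 * b))
    (ht : t ^ 2 = k₁ + k₂ - b) :
    (t * γ₂) ^ 2 + b * γ₁ ^ 2 = k₁ ∧ (t * γ₁) ^ 2 + b * γ₂ ^ 2 = k₂ ∧ γ₁ ^ 2 + γ₂ ^ 2 = 1 := by
  rw [mul_pow, mul_pow, hγ₁, hγ₂, ht]
  have hinv := mul_inv_cancel₀ hd
  exact ⟨by linear_combination k₁ * hinv, by linear_combination k₂ * hinv,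
    by linear_combination hinv⟩

theorem suslov_equal_b_critical_point_general
    (b k₁ k₂ : ℝ)
    (h₁ : k₁ < b) (h₂ : k₂ < b) (h₃ : b < k₁ + k₂)
    (γ₁s γ₂s t : ℝ)
    (hγ₁s : γ₁s = Real.sqrt ((k₂ - b) / (k₁ + k₂ - 2 * b)))
    (hγ₂s : γ₂s = Real.sqrt ((k₁ - b) / (k₁ + k₂ - 2 * b)))
    (ht : t = Real.sqrt (k₁ + k₂ - b)) :
    ((t * γ₂s) ^ 2 + b * γ₁s ^ 2 = k₁ ∧
     (t * γ₁s) ^ 2 + b * γ₂s ^ 2 = k₂ ∧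
     γ₁s ^ 2 + γ₂s ^ 2 + (0:ℝ) ^ 2 = 1) ∧
    (-b * γ₁s * 0 = 0 ∧ b * γ₂s * 0 = 0 ∧ (t * γ₂s) * 0 = 0 ∧ -(t * γ₁s) * 0 = 0 ∧
     γ₂s * (t * γ₁s) - γ₁s * (t * γ₂s) = 0) := by
  have hd : k₁ + k₂ - 2 * b < 0 := by linarith
  obtain ⟨hm₁, hm₂, hsphere⟩ := mem_level_set_of_sq_eq hd.ne
    (hγ₁s ▸ sq_sqrt_div_of_nonpos (by linarith) hd.le)
    (hγ₂s ▸ sq_sqrt_div_of_nonpos (by linarith) hd.le)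
    (ht ▸ Real.sq_sqrt (by linarith))
  refine ⟨⟨hm₁, hm₂, by rw [zero_pow two_ne_zero, add_zero, hsphere]⟩, ?_⟩
  refine ⟨?_, ?_, ?_, ?_, ?_⟩ <;> ring

/-- For `b₁ = b₂ = b` and `k ∈ D₂` (`k₁, k₂ < b`, `k₁ + k₂ > b`), the point
`(tγ₂*, tγ₁*, γ₁*, γ₂*, 0)` lies on `S_k` and is a zero of the Suslov vector field. -/
theorem suslov_equal_b_critical_point
    (b k₁ k₂ : ℝ) (hb : 0 < b) (hk₁ : 0 < k₁) (hk₂ : 0 < k₂)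
    (h₁ : k₁ < b) (h₂ : k₂ < b) (h₃ : b < k₁ + k₂)
    (γ₁s γ₂s t : ℝ)
    (hγ₁s : γ₁s = Real.sqrt ((k₂ - b) / (k₁ + k₂ - 2 * b)))
    (hγ₂s : γ₂s = Real.sqrt ((k₁ - b) / (k₁ + k₂ - 2 * b)))
    (ht : t = Real.sqrt (k₁ + k₂ - b)) :
    ((t * γ₂s) ^ 2 + b * γ₁s ^ 2 = k₁ ∧
     (t * γ₁s) ^ 2 + b * γ₂s ^ 2 = k₂ ∧
     γ₁s ^ 2 + γ₂s ^ 2 + (0:ℝ) ^ 2 = 1) ∧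
    (-b * γ₁s * 0 = 0 ∧ b * γ₂s * 0 = 0 ∧ (t * γ₂s) * 0 = 0 ∧ -(t * γ₁s) * 0 = 0 ∧
     γ₂s * (t * γ₁s) - γ₁s * (t * γ₂s) = 0) :=
  suslov_equal_b_critical_point_general b k₁ k₂ h₁ h₂ h₃ γ₁s γ₂s t hγ₁s hγ₂s ht
end

section
/- Suppose b₁ = b₂ = b > 0 and 0 < k₁ + k₂ < b (region D₁). Then the Suslov vector field X has no zeros on the level set S_k with k₁, k₂ > 0: there is no point (m₁,m₂,γ₁,γ₂,γ₃) satisfying m₁² + bγ₁² = k₁, m₂² + bγ₂² = k₂, γ₁² + γ₂² + γ₃² = 1 at which X vanishes. -/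
/-! On the level set, either `γ₃ = 0`, and then `γ₁² + γ₂² = 1` forces
`k₁ + k₂ = b + m₁² + m₂² ≥ b`; or `γ₃ ≠ 0`, and then the first and third components of `X`
force `γ₁ = m₁ = 0`, hence `k₁ = 0`. -/

section

variable {R : Type*} [CommRing R]

theorem le_add_of_sq_add_sq_eq_one [LinearOrder R] [IsStrictOrderedRing R]
    {b m₁ m₂ γ₁ γ₂ : R} (hγ : γ₁ ^ 2 + γ₂ ^ 2 = 1) :
    b ≤ (m₁ ^ 2 + b * γ₁ ^ 2) + (m₂ ^ 2 + b * γ₂ ^ 2) := by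
  have hsum : (m₁ ^ 2 + b * γ₁ ^ 2) + (m₂ ^ 2 + b * γ₂ ^ 2) = b + (m₁ ^ 2 + m₂ ^ 2) := by
    linear_combination b * hγ
  rw [hsum]
  exact le_add_of_nonneg_right (by positivity)

theorem sq_add_mul_sq_eq_zero_of_mul_eq_zero [NoZeroDivisors R]
    {b m γ γ₃ : R} (hb : b ≠ 0) (hγ₃ : γ₃ ≠ 0)
    (hγ : -b * γ * γ₃ = 0) (hm : m * γ₃ = 0) :
    m ^ 2 + b * γ ^ 2 = 0 := by
  have hγ0 : γ = 0 := by simpa [hb, hγ₃] using hγ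
  have hm0 : m = 0 := by simpa [hγ₃] using hm
  simp [hγ0, hm0]

end

theorem suslov_no_critical_points_D1_general
    (b k₁ k₂ : ℝ) (hb : 0 < b) (hk₁ : 0 < k₁) (h : k₁ + k₂ < b) :
    ¬ ∃ m₁ m₂ γ₁ γ₂ γ₃ : ℝ,
      m₁ ^ 2 + b * γ₁ ^ 2 = k₁ ∧ m₂ ^ 2 + b * γ₂ ^ 2 = k₂ ∧
      γ₁ ^ 2 + γ₂ ^ 2 + γ₃ ^ 2 = 1 ∧
      -b * γ₁ * γ₃ = 0 ∧ b * γ₂ * γ₃ = 0 ∧ m₁ * γ₃ = 0 ∧ -m₂ * γ₃ = 0 ∧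
      γ₂ * m₂ - γ₁ * m₁ = 0 := by
  rintro ⟨m₁, m₂, γ₁, γ₂, γ₃, rfl, rfl, hsphere, hX₁, -, hX₃, -, -⟩
  rcases eq_or_ne γ₃ 0 with hγ₃ | hγ₃
  · have hγ : γ₁ ^ 2 + γ₂ ^ 2 = 1 := by simpa [hγ₃] using hsphere
    exact (le_add_of_sq_add_sq_eq_one hγ).not_gt h
  · exact hk₁.ne' (sq_add_mul_sq_eq_zero_of_mul_eq_zero hb.ne' hγ₃ hX₁ hX₃)

/-- For `b₁ = b₂ = b` and `k ∈ D₁` (`k₁ + k₂ < b`), the Suslov vector field has no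
zeros on the level set `S_k`. -/
theorem suslov_no_critical_points_D1
    (b k₁ k₂ : ℝ) (hb : 0 < b) (hk₁ : 0 < k₁) (hk₂ : 0 < k₂) (h : k₁ + k₂ < b) :
    ¬ ∃ m₁ m₂ γ₁ γ₂ γ₃ : ℝ,
      m₁ ^ 2 + b * γ₁ ^ 2 = k₁ ∧ m₂ ^ 2 + b * γ₂ ^ 2 = k₂ ∧
      γ₁ ^ 2 + γ₂ ^ 2 + γ₃ ^ 2 = 1 ∧
      -b * γ₁ * γ₃ = 0 ∧ b * γ₂ * γ₃ = 0 ∧ m₁ * γ₃ = 0 ∧ -m₂ * γ₃ = 0 ∧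
      γ₂ * m₂ - γ₁ * m₁ = 0 :=
  suslov_no_critical_points_D1_general b k₁ k₂ hb hk₁ h
end

section
/- Suppose b₁ > b₂ > 0 and k₁ > 0, 0 < k₂ < b₂, and k₁/b₁ + k₂/b₂ < 1 (region D₃). Then the Suslov vector field has no zeros on S_k. -/
/-!
On `S_k` the two equations of level `k` give `γᵢ² ≤ kᵢ/bᵢ`. A zero of the field with `γ₃ ≠ 0`
forces `γ₁ = m₁ = 0`, hence `k₁ = 0`; a zero with `γ₃ = 0` has `γ₁² + γ₂² = 1`, which the
defining inequality `k₁/b₁ + k₂/b₂ < 1` of `D₃` rules out.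
-/

lemma sq_le_div_of_sq_add_mul_sq_eq {m γ b k : ℝ} (hb : 0 < b) (h : m ^ 2 + b * γ ^ 2 = k) :
    γ ^ 2 ≤ k / b :=
  (le_div_iff₀ hb).2 (by nlinarith [sq_nonneg m])

lemma eq_zero_of_sq_add_mul_sq_eq {m γ c b k : ℝ} (hb : b ≠ 0) (hc : c ≠ 0)
    (h : m ^ 2 + b * γ ^ 2 = k) (hγ : -b * γ * c = 0) (hm : m * c = 0) : k = 0 := by
  have hγ0 : γ = 0 := by simpa [hb, hc] using hγ
  have hm0 : m = 0 := by simpa [hc] using hm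
  rw [← h, hγ0, hm0]
  ring

theorem suslov_no_critical_points_D3_general
    (b₁ b₂ k₁ k₂ : ℝ) (hb : b₂ < b₁) (hb₂ : 0 < b₂) (hk₁ : 0 < k₁)
    (h₃ : k₁ / b₁ + k₂ / b₂ < 1) :
    ¬ ∃ m₁ m₂ γ₁ γ₂ γ₃ : ℝ,
      m₁ ^ 2 + b₁ * γ₁ ^ 2 = k₁ ∧ m₂ ^ 2 + b₂ * γ₂ ^ 2 = k₂ ∧
      γ₁ ^ 2 + γ₂ ^ 2 + γ₃ ^ 2 = 1 ∧
      -b₁ * γ₁ * γ₃ = 0 ∧ b₂ * γ₂ * γ₃ = 0 ∧ m₁ * γ₃ = 0 ∧ -m₂ * γ₃ = 0 ∧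
      γ₂ * m₂ - γ₁ * m₁ = 0 := by
  rintro ⟨m₁, m₂, γ₁, γ₂, γ₃, hS₁, hS₂, hsphere, hX₁, -, hX₃, -, -⟩
  have hb₁ : 0 < b₁ := hb₂.trans hb
  by_cases hγ₃ : γ₃ = 0
  · have hγ₁ := sq_le_div_of_sq_add_mul_sq_eq hb₁ hS₁
    have hγ₂ := sq_le_div_of_sq_add_mul_sq_eq hb₂ hS₂
    rw [hγ₃] at hsphere
    linarith
  · exact hk₁.ne' (eq_zero_of_sq_add_mul_sq_eq hb₁.ne' hγ₃ hS₁ hX₁ hX₃)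

/-- For `b₁ > b₂` and `k ∈ D₃` (`k₁ > 0`, `0 < k₂ < b₂`, `k₁/b₁ + k₂/b₂ < 1`), the
Suslov vector field has no zeros on `S_k`. -/
theorem suslov_no_critical_points_D3
    (b₁ b₂ k₁ k₂ : ℝ) (hb : b₂ < b₁) (hb₂ : 0 < b₂) (hk₁ : 0 < k₁) (hk₂ : 0 < k₂)
    (h₂ : k₂ < b₂) (h₃ : k₁ / b₁ + k₂ / b₂ < 1) :
    ¬ ∃ m₁ m₂ γ₁ γ₂ γ₃ : ℝ,
      m₁ ^ 2 + b₁ * γ₁ ^ 2 = k₁ ∧ m₂ ^ 2 + b₂ * γ₂ ^ 2 = k₂ ∧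
      γ₁ ^ 2 + γ₂ ^ 2 + γ₃ ^ 2 = 1 ∧
      -b₁ * γ₁ * γ₃ = 0 ∧ b₂ * γ₂ * γ₃ = 0 ∧ m₁ * γ₃ = 0 ∧ -m₂ * γ₃ = 0 ∧
      γ₂ * m₂ - γ₁ * m₁ = 0 :=
  suslov_no_critical_points_D3_general b₁ b₂ k₁ k₂ hb hb₂ hk₁ h₃
end

section
/- Suppose k₁, k₂ > 0 with k₁/b₁ + k₂/b₂ < 1 (region D₁). Then every point (m₁,m₂,γ₁,γ₂,γ₃) ∈ S_k has γ₃ ≠ 0; consequently S_k is the disjoint union of the two open-and-closed subsets {γ₃ > 0} ∩ S_k and {γ₃ < 0} ∩ S_k, each homeomorphic to the torus T²_k = {(m₁,m₂,γ₁,γ₂) : m₁² + b₁γ₁² = k₁, m₂² + b₂γ₂² = k₂} via the projection forgetting γ₃. -/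
/-!
On `T²_k` we have `b₁γ₁² ≤ k₁` and `b₂γ₂² ≤ k₂`, so in `D₁` the height `√(1 - γ₁² - γ₂²)` is
positive. A point of `S_k` is a point of `T²_k` together with `γ₃ = ±height`, hence `γ₃ ≠ 0`, the
sign of `γ₃` is locally constant, and each sign-sheet is the graph of the continuous function
`±height` over `T²_k`.
-/

open Set

section Clopen

variable {X α : Type*} [TopologicalSpace X] [LinearOrder α] [TopologicalSpace α]
  [OrderClosedTopology α] {f : X → α} {a : α}

theorem isClopen_setOf_lt_of_ne (hf : Continuous f) (hne : ∀ x, f x ≠ a) :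
    IsClopen {x | a < f x} := by
  have hle : {x | a < f x} = {x | a ≤ f x} := by ext x; exact ((hne x).symm.le_iff_lt).symm
  exact ⟨hle ▸ isClosed_le continuous_const hf, isOpen_lt continuous_const hf⟩

theorem isClopen_setOf_gt_of_ne (hf : Continuous f) (hne : ∀ x, f x ≠ a) :
    IsClopen {x | f x < a} := by
  have hle : {x | f x < a} = {x | f x ≤ a} := by ext x; exact ((hne x).le_iff_lt).symm
  exact ⟨hle ▸ isClosed_le hf continuous_const, isOpen_lt hf continuous_const⟩

end Clopen

namespace Suslov

local notation "ℝ⁴" => ℝ × ℝ × ℝ × ℝ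
local notation "ℝ⁵" => ℝ × ℝ × ℝ × ℝ × ℝ

def levelSet (b₁ b₂ k₁ k₂ : ℝ) : Set ℝ⁵ :=
  {p | p.1 ^ 2 + b₁ * p.2.2.1 ^ 2 = k₁ ∧ p.2.1 ^ 2 + b₂ * p.2.2.2.1 ^ 2 = k₂ ∧
    p.2.2.1 ^ 2 + p.2.2.2.1 ^ 2 + p.2.2.2.2 ^ 2 = 1}

def torus (b₁ b₂ k₁ k₂ : ℝ) : Set ℝ⁴ :=
  {q | q.1 ^ 2 + b₁ * q.2.2.1 ^ 2 = k₁ ∧ q.2.1 ^ 2 + b₂ * q.2.2.2 ^ 2 = k₂}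

def dropγ₃ (p : ℝ⁵) : ℝ⁴ := (p.1, p.2.1, p.2.2.1, p.2.2.2.1)

def withγ₃ (q : ℝ⁴) (t : ℝ) : ℝ⁵ := (q.1, q.2.1, q.2.2.1, q.2.2.2, t)

noncomputable def height (q : ℝ⁴) : ℝ := √(1 - q.2.2.1 ^ 2 - q.2.2.2 ^ 2)

variable {b₁ b₂ k₁ k₂ : ℝ}

theorem sq_le_div_of_sq_add_mul_sq_eq {m γ b k : ℝ} (hb : 0 < b) (h : m ^ 2 + b * γ ^ 2 = k) :
    γ ^ 2 ≤ k / b := by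
  rw [le_div_iff₀ hb]
  nlinarith [sq_nonneg m]

theorem sq_add_sq_lt_one_of_mem_torus (hb₁ : 0 < b₁) (hb₂ : 0 < b₂)
    (h : k₁ / b₁ + k₂ / b₂ < 1) {q : ℝ⁴} (hq : q ∈ torus b₁ b₂ k₁ k₂) :
    q.2.2.1 ^ 2 + q.2.2.2 ^ 2 < 1 := by
  linarith [sq_le_div_of_sq_add_mul_sq_eq hb₁ hq.1, sq_le_div_of_sq_add_mul_sq_eq hb₂ hq.2]

theorem height_pos (hb₁ : 0 < b₁) (hb₂ : 0 < b₂) (h : k₁ / b₁ + k₂ / b₂ < 1) {q : ℝ⁴}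
    (hq : q ∈ torus b₁ b₂ k₁ k₂) : 0 < height q :=
  Real.sqrt_pos.2 (by linarith [sq_add_sq_lt_one_of_mem_torus hb₁ hb₂ h hq])

theorem height_sq (hb₁ : 0 < b₁) (hb₂ : 0 < b₂) (h : k₁ / b₁ + k₂ / b₂ < 1) {q : ℝ⁴}
    (hq : q ∈ torus b₁ b₂ k₁ k₂) : height q ^ 2 = 1 - q.2.2.1 ^ 2 - q.2.2.2 ^ 2 :=
  Real.sq_sqrt (by linarith [sq_add_sq_lt_one_of_mem_torus hb₁ hb₂ h hq])

theorem dropγ₃_mem_torus {p : ℝ⁵} (hp : p ∈ levelSet b₁ b₂ k₁ k₂) :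
    dropγ₃ p ∈ torus b₁ b₂ k₁ k₂ :=
  ⟨hp.1, hp.2.1⟩

theorem abs_γ₃_eq_height {p : ℝ⁵} (hp : p ∈ levelSet b₁ b₂ k₁ k₂) :
    |p.2.2.2.2| = height (dropγ₃ p) := by
  rw [height, dropγ₃, ← Real.sqrt_sq_eq_abs]
  congr 1
  linarith [hp.2.2]

theorem γ₃_ne_zero (hb₁ : 0 < b₁) (hb₂ : 0 < b₂) (h : k₁ / b₁ + k₂ / b₂ < 1) {p : ℝ⁵}
    (hp : p ∈ levelSet b₁ b₂ k₁ k₂) : p.2.2.2.2 ≠ 0 :=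
  abs_pos.1 <| abs_γ₃_eq_height hp ▸ height_pos hb₁ hb₂ h (dropγ₃_mem_torus hp)

theorem withγ₃_mem_levelSet (hb₁ : 0 < b₁) (hb₂ : 0 < b₂) (h : k₁ / b₁ + k₂ / b₂ < 1)
    {q : ℝ⁴} {t : ℝ} (hq : q ∈ torus b₁ b₂ k₁ k₂) (ht : |t| = height q) :
    withγ₃ q t ∈ levelSet b₁ b₂ k₁ k₂ := by
  refine ⟨hq.1, hq.2, ?_⟩
  have ht2 : t ^ 2 = 1 - q.2.2.1 ^ 2 - q.2.2.2 ^ 2 := by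
    rw [← sq_abs, ht, height_sq hb₁ hb₂ h hq]
  simp only [withγ₃]
  linarith

/-- `σ r` is the root of `t² = r²` lying in `P`, so the sheet `{γ₃ ∈ P}` of `S_k` is the graph
of `σ ∘ height` over `T²_k`. -/
noncomputable def sheetChart (hb₁ : 0 < b₁) (hb₂ : 0 < b₂) (h : k₁ / b₁ + k₂ / b₂ < 1) {P : ℝ → Prop}
    (σ : ℝ → ℝ) (hσc : Continuous σ) (hσ : ∀ r, 0 < r → |σ r| = r ∧ P (σ r))
    (hP : ∀ t, P t → σ |t| = t) : PartialHomeomorph ℝ⁵ ℝ⁴ where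
  toFun := dropγ₃
  invFun q := withγ₃ q (σ (height q))
  source := levelSet b₁ b₂ k₁ k₂ ∩ {p | P p.2.2.2.2}
  target := torus b₁ b₂ k₁ k₂
  map_source' _ hp := dropγ₃_mem_torus hp.1
  map_target' _ hq :=
    have hσq := hσ _ (height_pos hb₁ hb₂ h hq)
    ⟨withγ₃_mem_levelSet hb₁ hb₂ h hq hσq.1, hσq.2⟩
  left_inv' p hp := by
    rw [← abs_γ₃_eq_height hp.1, hP _ hp.2]
    rfl
  right_inv' _ _ := rfl
  continuousOn_toFun := by unfold dropγ₃; fun_prop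
  continuousOn_invFun := by unfold withγ₃ height; fun_prop

end Suslov

open Suslov in
theorem suslov_D1_two_tori_general
    (b₁ b₂ k₁ k₂ : ℝ) (hb₁ : 0 < b₁) (hb₂ : 0 < b₂)
    (h : k₁ / b₁ + k₂ / b₂ < 1)
    (Sk : Set (ℝ × ℝ × ℝ × ℝ × ℝ))
    (hSk : Sk = {p | p.1 ^ 2 + b₁ * p.2.2.1 ^ 2 = k₁ ∧
                     p.2.1 ^ 2 + b₂ * p.2.2.2.1 ^ 2 = k₂ ∧
                     p.2.2.1 ^ 2 + p.2.2.2.1 ^ 2 + p.2.2.2.2 ^ 2 = 1})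
    (Tk : Set (ℝ × ℝ × ℝ × ℝ))
    (hTk : Tk = {q | q.1 ^ 2 + b₁ * q.2.2.1 ^ 2 = k₁ ∧ q.2.1 ^ 2 + b₂ * q.2.2.2 ^ 2 = k₂}) :
    (∀ p ∈ Sk, p.2.2.2.2 ≠ 0) ∧
    Sk = (Sk ∩ {p | 0 < p.2.2.2.2}) ∪ (Sk ∩ {p | p.2.2.2.2 < 0}) ∧
    (Sk ∩ {p | 0 < p.2.2.2.2}) ∩ (Sk ∩ {p | p.2.2.2.2 < 0}) = ∅ ∧
    IsClopen {p : Sk | 0 < (p : ℝ × ℝ × ℝ × ℝ × ℝ).2.2.2.2} ∧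
    IsClopen {p : Sk | (p : ℝ × ℝ × ℝ × ℝ × ℝ).2.2.2.2 < 0} ∧
    (∃ hplus : (Sk ∩ {p | 0 < p.2.2.2.2} : Set (ℝ × ℝ × ℝ × ℝ × ℝ)) ≃ₜ ↥Tk,
      ∀ p, (hplus p : ℝ × ℝ × ℝ × ℝ) =
        ((p : ℝ × ℝ × ℝ × ℝ × ℝ).1, (p : ℝ × ℝ × ℝ × ℝ × ℝ).2.1,
         (p : ℝ × ℝ × ℝ × ℝ × ℝ).2.2.1, (p : ℝ × ℝ × ℝ × ℝ × ℝ).2.2.2.1)) ∧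
    (∃ hminus : (Sk ∩ {p | p.2.2.2.2 < 0} : Set (ℝ × ℝ × ℝ × ℝ × ℝ)) ≃ₜ ↥Tk,
      ∀ p, (hminus p : ℝ × ℝ × ℝ × ℝ) =
        ((p : ℝ × ℝ × ℝ × ℝ × ℝ).1, (p : ℝ × ℝ × ℝ × ℝ × ℝ).2.1,
         (p : ℝ × ℝ × ℝ × ℝ × ℝ).2.2.1, (p : ℝ × ℝ × ℝ × ℝ × ℝ).2.2.2.1)) := by
  obtain rfl : Sk = levelSet b₁ b₂ k₁ k₂ := hSk
  obtain rfl : Tk = torus b₁ b₂ k₁ k₂ := hTk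
  have hne (p) (hp : p ∈ levelSet b₁ b₂ k₁ k₂) : p.2.2.2.2 ≠ 0 := γ₃_ne_zero hb₁ hb₂ h hp
  have hγ₃ : Continuous fun p : levelSet b₁ b₂ k₁ k₂ => (p : ℝ × ℝ × ℝ × ℝ × ℝ).2.2.2.2 := by
    fun_prop
  refine ⟨hne, ?_, ?_, isClopen_setOf_lt_of_ne hγ₃ fun p => hne p p.2,
    isClopen_setOf_gt_of_ne hγ₃ fun p => hne p p.2,
    ⟨(sheetChart hb₁ hb₂ h (P := (0 < ·)) id continuous_id (fun r hr => ⟨abs_of_pos hr, hr⟩)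
      fun t ht => abs_of_pos ht).toHomeomorphSourceTarget, fun _ => rfl⟩,
    ⟨(sheetChart hb₁ hb₂ h (P := (· < 0)) Neg.neg continuous_neg
      (fun r hr => ⟨by rw [abs_neg, abs_of_pos hr], neg_neg_of_pos hr⟩)
      fun t ht => by rw [abs_of_neg ht, neg_neg]).toHomeomorphSourceTarget, fun _ => rfl⟩⟩
  · rw [← inter_union_distrib_left, eq_comm, inter_eq_left]
    exact fun p hp => (hne p hp).lt_or_gt.symm
  · exact eq_empty_of_forall_notMem fun p ⟨⟨_, (hpos : 0 < p.2.2.2.2)⟩, _, hneg⟩ =>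
    lt_asymm hpos hneg

/-- For `k ∈ D₁` (`k₁/b₁ + k₂/b₂ < 1`), every point of `S_k` has `γ₃ ≠ 0`, so `S_k` is the
disjoint union of the clopen pieces `{γ₃ > 0}` and `{γ₃ < 0}`, each homeomorphic to the
torus `T²_k` via the projection forgetting `γ₃`. -/
theorem suslov_D1_two_tori
    (b₁ b₂ k₁ k₂ : ℝ) (hb₁ : 0 < b₁) (hb₂ : 0 < b₂) (hk₁ : 0 < k₁) (hk₂ : 0 < k₂)
    (h : k₁ / b₁ + k₂ / b₂ < 1)
    (Sk : Set (ℝ × ℝ × ℝ × ℝ × ℝ))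
    (hSk : Sk = {p | p.1 ^ 2 + b₁ * p.2.2.1 ^ 2 = k₁ ∧
                     p.2.1 ^ 2 + b₂ * p.2.2.2.1 ^ 2 = k₂ ∧
                     p.2.2.1 ^ 2 + p.2.2.2.1 ^ 2 + p.2.2.2.2 ^ 2 = 1})
    (Tk : Set (ℝ × ℝ × ℝ × ℝ))
    (hTk : Tk = {q | q.1 ^ 2 + b₁ * q.2.2.1 ^ 2 = k₁ ∧ q.2.1 ^ 2 + b₂ * q.2.2.2 ^ 2 = k₂}) :
    (∀ p ∈ Sk, p.2.2.2.2 ≠ 0) ∧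
    Sk = (Sk ∩ {p | 0 < p.2.2.2.2}) ∪ (Sk ∩ {p | p.2.2.2.2 < 0}) ∧
    (Sk ∩ {p | 0 < p.2.2.2.2}) ∩ (Sk ∩ {p | p.2.2.2.2 < 0}) = ∅ ∧
    IsClopen {p : Sk | 0 < (p : ℝ × ℝ × ℝ × ℝ × ℝ).2.2.2.2} ∧
    IsClopen {p : Sk | (p : ℝ × ℝ × ℝ × ℝ × ℝ).2.2.2.2 < 0} ∧
    (∃ hplus : (Sk ∩ {p | 0 < p.2.2.2.2} : Set (ℝ × ℝ × ℝ × ℝ × ℝ)) ≃ₜ ↥Tk,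
      ∀ p, (hplus p : ℝ × ℝ × ℝ × ℝ) =
        ((p : ℝ × ℝ × ℝ × ℝ × ℝ).1, (p : ℝ × ℝ × ℝ × ℝ × ℝ).2.1,
         (p : ℝ × ℝ × ℝ × ℝ × ℝ).2.2.1, (p : ℝ × ℝ × ℝ × ℝ × ℝ).2.2.2.1)) ∧
    (∃ hminus : (Sk ∩ {p | p.2.2.2.2 < 0} : Set (ℝ × ℝ × ℝ × ℝ × ℝ)) ≃ₜ ↥Tk,
      ∀ p, (hminus p : ℝ × ℝ × ℝ × ℝ) =
        ((p : ℝ × ℝ × ℝ × ℝ × ℝ).1, (p : ℝ × ℝ × ℝ × ℝ × ℝ).2.1,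
         (p : ℝ × ℝ × ℝ × ℝ × ℝ).2.2.1, (p : ℝ × ℝ × ℝ × ℝ × ℝ).2.2.2.1)) :=
  suslov_D1_two_tori_general b₁ b₂ k₁ k₂ hb₁ hb₂ h Sk hSk Tk hTk
end
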